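/- Let Σ ∈ ℝ^{n×n} be a signature matrix (a diagonal matrix whose diagonal entries are each 1 or −1), let P, Q ∈ ℝ^{n×n}[ξ], and set Q̂ := ½(Q − PΣ) and P̂ := ½(PΣ + Q). Then (P,Q) is a bounded-real pair if and only if (P̂,Q̂) is a positive-real pair. -/

import Mathlib

/-!
Right multiplication by the constant matrix `½ [[Σ, Σ], [-I, I]]`, which is invertible because
`Σ² = I`, turns `[P  -Q]` into `[P̂  -Q̂]`; so the rank conditions and the left kernels at every `λ`
agree. Because also `Σᵀ = Σ`, expanding gives `P̂ Q̂~ + Q̂ P̂~ = ½ (Q Q~ - P P~)`, both for the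
para-transpose `X~(ξ) = X(-ξ)ᵀ` and for `X~(λ) = X(conj λ)ᵀ`, so the two positivity conditions
and the two kernel conditions coincide. The remaining gap, `Re λ > 0` against `Re λ ≥ 0`, is
closed by continuity: positive semidefinite matrices form a closed set.
-/

open MeasureTheory Matrix Polynomial
open scoped ComplexOrder

noncomputable section

/-- real matrices of the indicated size -/
abbrev Mat (m n : ℕ) := Matrix (Fin m) (Fin n) ℝ

/-- evaluation of a real polynomial matrix at a complex point -/
def evalC {m n : Type*} (P : Matrix m n (Polynomial ℝ)) (z : ℂ) : Matrix m n ℂ :=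
  Matrix.of fun i j => Polynomial.aeval z (P i j)

/-- the polynomial matrix `P(−ξ)ᵀ` -/
def starT {m n : Type*} (P : Matrix m n (Polynomial ℝ)) : Matrix n m (Polynomial ℝ) :=
  Matrix.of fun i j => (P j i).comp (-Polynomial.X)

/-- positive-real pair of polynomial matrices -/
def PosRealPair {k : Type*} [Fintype k] [DecidableEq k]
    (P Q : Matrix k k (Polynomial ℝ)) : Prop :=
  (∀ z : ℂ, 0 < z.re →
      (evalC P z * (evalC Q ((starRingEnd ℂ) z))ᵀ +
        evalC Q z * (evalC P ((starRingEnd ℂ) z))ᵀ).PosSemidef) ∧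
  (∀ z : ℂ, 0 ≤ z.re →
      (Matrix.fromCols (evalC P z) (-(evalC Q z))).rank = Fintype.card k) ∧
  (∀ (p : k → Polynomial ℝ) (z : ℂ),
      Matrix.vecMul p (P * starT Q + Q * starT P) = 0 →
      Matrix.vecMul (fun i => Polynomial.aeval z (p i))
        (Matrix.fromCols (evalC P z) (-(evalC Q z))) = 0 →
      (fun i => Polynomial.aeval z (p i)) = (0 : k → ℂ))

/-- bounded-real pair of polynomial matrices -/
def BoundedRealPair {k l : Type*} [Fintype k] [DecidableEq k] [Fintype l]
    (P : Matrix k l (Polynomial ℝ)) (Q : Matrix k k (Polynomial ℝ)) : Prop :=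
  (∀ z : ℂ, 0 ≤ z.re →
      (evalC Q z * (evalC Q ((starRingEnd ℂ) z))ᵀ -
        evalC P z * (evalC P ((starRingEnd ℂ) z))ᵀ).PosSemidef) ∧
  (∀ z : ℂ, 0 ≤ z.re →
      (Matrix.fromCols (evalC P z) (-(evalC Q z))).rank = Fintype.card k) ∧
  (∀ (p : k → Polynomial ℝ) (z : ℂ),
      Matrix.vecMul p (Q * starT Q - P * starT P) = 0 →
      Matrix.vecMul (fun i => Polynomial.aeval z (p i))
        (Matrix.fromCols (evalC P z) (-(evalC Q z))) = 0 →
      (fun i => Polynomial.aeval z (p i)) = (0 : k → ℂ))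

/-- a signature matrix: diagonal with diagonal entries `±1` -/
def IsSignature {n : ℕ} (S : Matrix (Fin n) (Fin n) ℝ) : Prop :=
  (∀ i j, i ≠ j → S i j = 0) ∧ ∀ i, S i i = 1 ∨ S i i = -1


namespace IsSignature

variable {n : ℕ} {S : Matrix (Fin n) (Fin n) ℝ}

lemma eq_diagonal (h : IsSignature S) : S = diagonal fun i => S i i := by
  ext i j
  by_cases hij : i = j
  · subst hij; simp
  · simp [diagonal_apply_ne _ hij, h.1 i j hij]

lemma mul_self (h : IsSignature S) : S * S = 1 := by
  rw [h.eq_diagonal, diagonal_mul_diagonal, ← diagonal_one]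
  congr 1
  funext i
  rcases h.2 i with h' | h' <;> simp [h']

lemma transpose_eq (h : IsSignature S) : Sᵀ = S := by
  rw [h.eq_diagonal, diagonal_transpose]

end IsSignature

lemma Matrix.map_mul_map_self {k R R' : Type*} [Fintype k] [DecidableEq k] [Semiring R]
    [Semiring R'] {S : Matrix k k R} (hS : S * S = 1) (f : R →+* R') :
    S.map f * S.map f = 1 := by
  rw [← f.mapMatrix_apply, ← map_mul, hS, map_one]

lemma half_smul_cayley_identity {K R : Type*} [Field K] [CharZero K] [Ring R] [Algebra K R]
    {t : R} (ht : t * t = 1) (a a' q q' : R) :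
    (1 / 2 : K) • (a * t + q) * ((1 / 2 : K) • (q' - t * a')) +
        (1 / 2 : K) • (q - a * t) * ((1 / 2 : K) • (t * a' + q')) =
      (1 / 2 : K) • (q * q' - a * a') := by
  have htt : a * t * (t * a') = a * a' := by rw [mul_assoc, ← mul_assoc t, ht, one_mul]
  have hsum : (a * t + q) * (q' - t * a') + (q - a * t) * (t * a' + q') =
      (2 : K) • (q * q' - a * t * (t * a')) := by
    rw [two_smul]; noncomm_ring
  rw [smul_mul_smul_comm, smul_mul_smul_comm, ← smul_add, hsum, htt, smul_smul]
  norm_num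

section Reflection

variable {l m n : Type*}

lemma starT_eq_map_transpose (A : Matrix m n ℝ[X]) :
    starT A = Aᵀ.map (aeval (R := ℝ) (-X : ℝ[X])) := by
  ext i j; simp [starT, comp_eq_aeval]

lemma starT_mul [Fintype n] (A : Matrix l n ℝ[X]) (B : Matrix n m ℝ[X]) :
    starT (A * B) = starT B * starT A := by
  simp only [starT_eq_map_transpose, transpose_mul]
  exact Matrix.map_mul (f := (aeval (R := ℝ) (-X : ℝ[X])).toRingHom)

lemma starT_add (A B : Matrix m n ℝ[X]) : starT (A + B) = starT A + starT B := by
  ext i j; simp [starT]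

lemma starT_sub (A B : Matrix m n ℝ[X]) : starT (A - B) = starT A - starT B := by
  ext i j; simp [starT]

lemma starT_smul (r : ℝ) (A : Matrix m n ℝ[X]) : starT (r • A) = r • starT A := by
  ext i j; simp [starT]

lemma starT_map_C (S : Matrix m n ℝ) : starT (S.map C) = Sᵀ.map C := by
  ext i j; simp [starT]

end Reflection

section Evaluation

variable {l m n : Type*}

lemma evalC_mul [Fintype n] (A : Matrix l n ℝ[X]) (B : Matrix n m ℝ[X]) (z : ℂ) :
    evalC (A * B) z = evalC A z * evalC B z :=
  Matrix.map_mul (f := (aeval z : ℝ[X] →ₐ[ℝ] ℂ).toRingHom)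

lemma evalC_add (A B : Matrix m n ℝ[X]) (z : ℂ) : evalC (A + B) z = evalC A z + evalC B z := by
  ext i j; simp [evalC]

lemma evalC_sub (A B : Matrix m n ℝ[X]) (z : ℂ) : evalC (A - B) z = evalC A z - evalC B z := by
  ext i j; simp [evalC]

lemma evalC_smul (r : ℝ) (A : Matrix m n ℝ[X]) (z : ℂ) : evalC (r • A) z = r • evalC A z := by
  ext i j; simp [evalC]

lemma evalC_map_C (S : Matrix m n ℝ) (z : ℂ) : evalC (S.map C) z = S.map (algebraMap ℝ ℂ) := by
  ext i j; simp [evalC]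

lemma transpose_evalC_conj (A : Matrix m n ℝ[X]) (z : ℂ) :
    (evalC A (starRingEnd ℂ z))ᵀ = (evalC A z)ᴴ := by
  ext i j
  simp [evalC, conjTranspose_apply, aeval_algHom_apply, ← Complex.conjAe_coe]

lemma continuous_evalC (A : Matrix m n ℝ[X]) : Continuous (evalC A) :=
  continuous_matrix fun i j => (A i j).continuous_aeval

lemma continuous_evalC_mul_transpose_evalC_conj [Fintype n] (A B : Matrix m n ℝ[X]) :
    Continuous fun z => evalC A z * (evalC B (starRingEnd ℂ z))ᵀ :=
  (continuous_evalC A).matrix_mul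
    ((continuous_evalC B).comp Complex.continuous_conj).matrix_transpose

end Evaluation

section PosSemidef

variable {k : Type*}

lemma Matrix.posSemidef_real_smul_iff {M : Matrix k k ℂ} {r : ℝ} (hr : 0 < r) :
    (r • M).PosSemidef ↔ M.PosSemidef := by
  refine ⟨fun h => ?_, fun h => h.smul hr.le⟩
  simpa [smul_smul, hr.ne'] using h.smul (inv_nonneg.2 hr.le)

lemma Matrix.isClosed_setOf_posSemidef [Fintype k] :
    IsClosed {M : Matrix k k ℂ | M.PosSemidef} := by
  simp only [posSemidef_iff_dotProduct_mulVec, Set.ofPred_and, Set.ofPred_forall]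
  refine (isClosed_eq continuous_id.matrix_conjTranspose continuous_id).inter
    (isClosed_iInter fun x => isClosed_le continuous_const ?_)
  exact continuous_const.dotProduct (continuous_id.matrix_mulVec continuous_const)

lemma posSemidef_of_re_nonneg [Fintype k] {F : ℂ → Matrix k k ℂ} (hF : Continuous F)
    (h : ∀ w : ℂ, 0 < w.re → (F w).PosSemidef) {z : ℂ} (hz : 0 ≤ z.re) : (F z).PosSemidef := by
  have hlim : Filter.Tendsto (fun t : ℝ => F (z + t)) (nhdsWithin 0 (Set.Ioi 0)) (nhds (F z)) := by
    have hcont : Continuous fun t : ℝ => F (z + t) := hF.comp (by fun_prop)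
    simpa using tendsto_nhdsWithin_of_tendsto_nhds (hcont.tendsto 0)
  refine isClosed_setOf_posSemidef.mem_of_tendsto hlim ?_
  filter_upwards [self_mem_nhdsWithin] with t (ht : 0 < t)
  exact h _ (by simpa using add_pos_of_nonneg_of_pos hz ht)

end PosSemidef

section CayleyBlock

variable (K : Type*) {R : Type*} [Field K] [CharZero K] [CommRing R] [Algebra K R]
  {m k : Type*} [Fintype k] [DecidableEq k]

def cayleyBlock (T : Matrix k k R) : Matrix (k ⊕ k) (k ⊕ k) R :=
  fromBlocks ((1 / 2 : K) • T) ((1 / 2 : K) • T) (-((1 / 2 : K) • 1)) ((1 / 2 : K) • 1)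

lemma fromCols_mul_cayleyBlock (A B : Matrix m k R) (T : Matrix k k R) :
    fromCols A (-B) * cayleyBlock K T =
      fromCols ((1 / 2 : K) • (A * T + B)) (-((1 / 2 : K) • (B - A * T))) := by
  rw [cayleyBlock, fromCols_mul_fromBlocks]
  congr 1 <;> simp only [Matrix.mul_smul, Matrix.mul_one, Matrix.mul_neg] <;>
    module

lemma cayleyBlock_mul_fromBlocks {T : Matrix k k R} (hT : T * T = 1) :
    cayleyBlock K T * fromBlocks T (-1 : Matrix k k R) T 1 = 1 := by
  rw [cayleyBlock, fromBlocks_multiply, ← fromBlocks_one]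
  simp only [smul_mul_assoc, hT, Matrix.one_mul, Matrix.mul_one, Matrix.mul_neg, Matrix.neg_mul,
    neg_neg]
  congr 1 <;> module

lemma isUnit_cayleyBlock {T : Matrix k k R} (hT : T * T = 1) : IsUnit (cayleyBlock K T) :=
  IsUnit.of_mul_eq_one _ (cayleyBlock_mul_fromBlocks K hT)

end CayleyBlock

section CayleyPair

variable {k : Type*} [Fintype k] [DecidableEq k] {S : Matrix k k ℝ}

lemma half_smul_cayley_mul_starT (hS : S * S = 1) (hSt : Sᵀ = S) (P Q : Matrix k k ℝ[X]) :
    (1 / 2 : ℝ) • (P * S.map C + Q) * starT ((1 / 2 : ℝ) • (Q - P * S.map C)) +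
        (1 / 2 : ℝ) • (Q - P * S.map C) * starT ((1 / 2 : ℝ) • (P * S.map C + Q)) =
      (1 / 2 : ℝ) • (Q * starT Q - P * starT P) := by
  rw [starT_smul, starT_smul, starT_sub, starT_add, starT_mul, starT_map_C, hSt]
  exact half_smul_cayley_identity (map_mul_map_self hS C) _ _ _ _

lemma half_smul_cayley_evalC_mul_conj (hS : S * S = 1) (hSt : Sᵀ = S)
    (P Q : Matrix k k ℝ[X]) (z : ℂ) :
    evalC ((1 / 2 : ℝ) • (P * S.map C + Q)) z *
          (evalC ((1 / 2 : ℝ) • (Q - P * S.map C)) (starRingEnd ℂ z))ᵀ +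
        evalC ((1 / 2 : ℝ) • (Q - P * S.map C)) z *
          (evalC ((1 / 2 : ℝ) • (P * S.map C + Q)) (starRingEnd ℂ z))ᵀ =
      (1 / 2 : ℝ) • (evalC Q z * (evalC Q (starRingEnd ℂ z))ᵀ -
        evalC P z * (evalC P (starRingEnd ℂ z))ᵀ) := by
  have hSH : (S.map (algebraMap ℝ ℂ))ᴴ = S.map (algebraMap ℝ ℂ) := by
    ext i j
    simpa [conjTranspose_apply] using congr_fun (congr_fun hSt i) j
  simp only [transpose_evalC_conj]
  simp only [evalC_smul, evalC_add, evalC_sub, evalC_mul, evalC_map_C, conjTranspose_smul,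
    star_trivial, conjTranspose_add, conjTranspose_sub, conjTranspose_mul, hSH]
  exact half_smul_cayley_identity (map_mul_map_self hS _) _ _ _ _

lemma fromCols_evalC_half_smul_cayley (P Q : Matrix k k ℝ[X]) (z : ℂ) :
    fromCols (evalC ((1 / 2 : ℝ) • (P * S.map C + Q)) z)
        (-evalC ((1 / 2 : ℝ) • (Q - P * S.map C)) z) =
      fromCols (evalC P z) (-evalC Q z) * cayleyBlock ℝ (S.map (algebraMap ℝ ℂ)) := by
  rw [fromCols_mul_cayleyBlock]
  simp only [evalC_smul, evalC_add, evalC_sub, evalC_mul, evalC_map_C]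

end CayleyPair

theorem statement15 {n : ℕ} (Sg : Matrix (Fin n) (Fin n) ℝ) (hSg : IsSignature Sg)
    (P Q : Matrix (Fin n) (Fin n) (Polynomial ℝ)) :
    BoundedRealPair P Q ↔
      PosRealPair ((1 / 2 : ℝ) • (P * Sg.map Polynomial.C + Q))
        ((1 / 2 : ℝ) • (Q - P * Sg.map Polynomial.C)) := by
  have hS := hSg.mul_self
  have hSt := hSg.transpose_eq
  have hunit := isUnit_cayleyBlock ℝ (map_mul_map_self hS (algebraMap ℝ ℂ))
  refine and_congr ?_ (and_congr ?_ ?_)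
  · simp only [half_smul_cayley_evalC_mul_conj hS hSt, posSemidef_real_smul_iff one_half_pos]
    refine ⟨fun h z hz => h z hz.le, fun h z => posSemidef_of_re_nonneg ?_ h⟩
    exact (continuous_evalC_mul_transpose_evalC_conj Q Q).sub
      (continuous_evalC_mul_transpose_evalC_conj P P)
  · refine forall₂_congr fun z _ => ?_
    rw [fromCols_evalC_half_smul_cayley,
      rank_mul_eq_left_of_isUnit_det _ _ ((isUnit_iff_isUnit_det _).1 hunit)]
  · refine forall₂_congr fun p z => imp_congr ?_ (imp_congr ?_ Iff.rfl)
    · rw [half_smul_cayley_mul_starT hS hSt, vecMul_smul,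
        smul_eq_zero_iff_right one_half_pos.ne']
    · rw [fromCols_evalC_half_smul_cayley, ← vecMul_vecMul,
        (vecMul_injective_of_isUnit hunit).eq_iff' (zero_vecMul _)]

end
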